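/- arXiv:1806.11103 — 7 statements merged into one kernel-verified Lean document; each statement's English description precedes it below -/
import Mathlib

section
/- If a path l from u to v in a DAG G is d-separated by a set S, and W is the set of all intermediate vertices on l with W ⊆ S, then l is d-separated (blocked) by W itself, and also by any superset of W. -/
/-- A directed graph (given by its edge relation) is acyclic. -/
def Acyclic {V : Type*} (E : V → V → Prop) : Prop :=
  ∀ v, ¬ Relation.TransGen E v v

/-- `b` is a collider between consecutive path vertices `a, b, c`:
both edges point into `b`. -/
def Collider {V : Type*} (E : V → V → Prop) (a b c : V) : Prop :=
  E a b ∧ E c b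

/-- Descendants of `u` (including `u` itself): reachable by a directed path. -/
def Desc {V : Type*} (E : V → V → Prop) (u : V) : Set V :=
  {w | Relation.ReflTransGen E u w}

/-- Ancestors of some vertex of `W`, excluding `W` itself: `an(W)`. -/
def anc {V : Type*} (E : V → V → Prop) (W : Set V) : Set V :=
  {x | x ∉ W ∧ ∃ w ∈ W, Relation.TransGen E x w}

/-- `An(W) = W ∪ an(W)`. -/
def Anc {V : Type*} (E : V → V → Prop) (W : Set V) : Set V :=
  W ∪ anc E W

/-- `l` is an (undirected) path from `u` to `v` in the directed graph `E`:
a duplicate-free list of vertices starting at `u`, ending at `v`,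
with consecutive vertices joined by an edge (in either direction). -/
def IsPath {V : Type*} (E : V → V → Prop) (u v : V) (l : List V) : Prop :=
  l.Chain' (fun a b => E a b ∨ E b a) ∧ l.head? = some u ∧ l.getLast? = some v ∧ l.Nodup

/-- The set of intermediate (interior) vertices of a path `l`:
vertices having a predecessor and successor on `l`. -/
def Interior {V : Type*} (l : List V) : Set V :=
  {b | ∃ a c, [a, b, c] <:+: l}

/-- The path `l` is blocked (d-separated) by `S`: it contains a non-collider
vertex in `S`, or a collider vertex `b` such that neither `b` nor any
descendant of `b` is in `S`. -/
def Blocked {V : Type*} (E : V → V → Prop) (l : List V) (S : Set V) : Prop :=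
  ∃ a b c, [a, b, c] <:+: l ∧
    ((¬ Collider E a b c ∧ b ∈ S) ∨ (Collider E a b c ∧ ∀ w ∈ Desc E b, w ∉ S))

/-- `u` and `v` are d-separated by `S`: every path between them is blocked. -/
def DSep {V : Type*} (E : V → V → Prop) (u v : V) (S : Set V) : Prop :=
  ∀ l, IsPath E u v l → Blocked E l S

/-- Sets `A` and `B` are d-separated by `S`. -/
def DSepSet {V : Type*} (E : V → V → Prop) (A B S : Set V) : Prop :=
  ∀ u ∈ A, ∀ v ∈ B, DSep E u v S

/-- The union of the tree nodes in the subtree on the `i`-side after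
removing the tree edge `{i, j}`. -/
def SubtreeVerts {V ι : Type*} (T : SimpleGraph ι) (C : ι → Set V) (i j : ι) : Set V :=
  ⋃ k ∈ {k | (T.deleteEdges {s(i, j)}).Reachable i k}, C k

/-- `T` (with node sets `C`) is a d-separation tree for the DAG `E`:
`T` is a tree, the node sets cover `V`, and for each tree edge the separator
`C i ∩ C j` d-separates the remaining vertices of the two subtrees. -/
def IsDSepTree {V ι : Type*} (E : V → V → Prop) (T : SimpleGraph ι) (C : ι → Set V) : Prop :=
  T.IsTree ∧ (⋃ i, C i) = Set.univ ∧
    ∀ i j, T.Adj i j →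
      DSepSet E (SubtreeVerts T C i j \ (C i ∩ C j))
        (SubtreeVerts T C j i \ (C i ∩ C j)) (C i ∩ C j)

/-- If a path `l` from `u` to `v` in a DAG is blocked by `S`, and
`W` is the set of intermediate vertices of `l` with `W ⊆ S`, then `l` is
blocked by `W` and by any superset of `W`. -/
theorem stmt_0 {V : Type*} (E : V → V → Prop) (hG : Acyclic E)
    (u v : V) (l : List V) (hl : IsPath E u v l)
    (S W : Set V) (hW : W = Interior l) (hWS : W ⊆ S)
    (hblock : Blocked E l S) :
    ∀ S' : Set V, W ⊆ S' → Blocked E l S' := by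
  intro S' hS'
  obtain ⟨a, b, c, hinf, h⟩ := hblock
  have hbW : b ∈ W := hW ▸ ⟨a, c, hinf⟩
  rcases h with ⟨hnc, _⟩ | ⟨hc, hd⟩
  · exact ⟨a, b, c, hinf, Or.inl ⟨hnc, hS' hbW⟩⟩
  · exact absurd (hWS hbW) (hd b Relation.ReflTransGen.refl)
end

section
/- Let T be a d-separation tree for a DAG G, and let K be a separator of T splitting T into subtrees with vertex sets V1 and V2. If l is a path in G from u ∈ V1 \ K to v ∈ V2 \ K, and W is the set of all intermediate vertices on l, then l is blocked by W ∩ K and by any set containing W ∩ K. -/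
section CrossHelper
variable {V : Type*}

lemma cross_lemma {A B K2 : Set V} {R : V → V → Prop}
    (hAB : ∀ x y, x ∈ A → y ∈ B → ¬ R x y)
    (hABd : ∀ x, x ∈ A → x ∉ B)
    (hBK : ∀ x, x ∈ B → x ∉ K2) :
    ∀ n (l : List V), l.length ≤ n → l.Chain' R →
      (∀ x ∈ l, x ∈ A ∨ x ∈ B ∨ x ∈ K2) →
      (∀ x y, [x, y] <:+: l → x ∈ K2 → y ∈ K2 → False) →
      ∀ a, l.head? = some a → a ∈ A →
      ∀ b, l.getLast? = some b → b ∈ B →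
      ∃ p q r, [p, q, r] <:+: l ∧ p ∈ A ∧ q ∈ K2 ∧ r ∈ B := by
  intro n
  induction n with
  | zero =>
    intro l hlen _ _ _ a ha _ _ _ _
    have : l = [] := List.length_eq_zero_iff.mp (Nat.le_zero.mp hlen)
    subst this; simp at ha
  | succ n ih =>
    intro l hlen hchain hcov hKK a ha haA b hb hbB
    match l with
    | [] => simp at ha
    | [a0] =>
      have ha' : a0 = a := by simpa using ha
      have hb' : a0 = b := by simpa using hb
      subst ha'; subst hb'
      exact absurd hbB (hABd a0 haA)
    | a0 :: b0 :: rest =>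
      simp only [List.head?_cons, Option.some.injEq] at ha
      subst ha
      have hchain' := (List.isChain_cons_cons.mp hchain)
      rcases hcov b0 (by simp) with hb0 | hb0 | hb0
      · -- b0 ∈ A : recurse on b0 :: rest
        have hsuf : (b0 :: rest) <:+ (a0 :: b0 :: rest) := List.suffix_cons a0 _
        obtain ⟨p, q, r, hinf, h1, h2, h3⟩ :=
          ih (b0 :: rest) (by simpa using Nat.le_of_succ_le_succ hlen) hchain'.2
            (fun x hx => hcov x (by simp [hx] <;> tauto))
            (fun x y hxy => hKK x y (hxy.trans hsuf.isInfix))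
            b0 rfl hb0 b (by rw [← hb]; rfl) hbB
        exact ⟨p, q, r, hinf.trans hsuf.isInfix, h1, h2, h3⟩
      · exact absurd hchain'.1 (hAB a0 b0 haA hb0)
      · -- b0 ∈ K2
        match rest with
        | [] =>
          have hbb : b = b0 := by simpa using hb.symm
          exact absurd hb0 (hBK b hbB ∘ (hbb ▸ id))
        | c0 :: rest' =>
          rcases hcov c0 (by simp) with hc0 | hc0 | hc0
          · -- c0 ∈ A : recurse on c0 :: rest'
            have hsuf : (c0 :: rest') <:+ (a0 :: b0 :: c0 :: rest') :=
              (List.suffix_cons b0 _).trans (List.suffix_cons a0 _)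
            obtain ⟨p, q, r, hinf, h1, h2, h3⟩ :=
              ih (c0 :: rest') (by simp at hlen ⊢; omega) (hchain'.2.tail)
                (fun x hx => hcov x (by simp at hx ⊢ <;> tauto))
                (fun x y hxy => hKK x y (hxy.trans hsuf.isInfix))
                c0 rfl hc0 b (by rw [← hb]; rfl) hbB
            exact ⟨p, q, r, hinf.trans hsuf.isInfix, h1, h2, h3⟩
          · exact ⟨a0, b0, c0, ⟨[], rest', rfl⟩, haA, hb0, hc0⟩
          · exact (hKK b0 c0 ⟨[a0], rest', rfl⟩ hb0 hc0).elim

end CrossHelper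

/-- for a separator `K = C i ∩ C j` of a d-separation tree and a
path `l` from `u ∈ V₁ \ K` to `v ∈ V₂ \ K` with interior vertex set `W`,
`l` is blocked by `W ∩ K` and by any set containing it. -/
theorem stmt_1 {V ι : Type*} (E : V → V → Prop) (hG : Acyclic E)
    (T : SimpleGraph ι) (C : ι → Set V) (hT : IsDSepTree E T C)
    (i j : ι) (hij : T.Adj i j)
    (u v : V)
    (hu : u ∈ SubtreeVerts T C i j \ (C i ∩ C j))
    (hv : v ∈ SubtreeVerts T C j i \ (C i ∩ C j))
    (l : List V) (hl : IsPath E u v l)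
    (W : Set V) (hW : W = Interior l) :
    ∀ S : Set V, W ∩ (C i ∩ C j) ⊆ S → Blocked E l S := by
  intro S hS
  set K : Set V := C i ∩ C j with hK
  set A : Set V := SubtreeVerts T C i j \ K with hA
  set B : Set V := SubtreeVerts T C j i \ K with hB
  have hsep : DSepSet E A B K := hT.2.2 i j hij
  -- (1) A and B are disjoint
  have hABd : ∀ x, x ∈ A → x ∉ B := by
    intro x hx hxB
    have hpx : IsPath E x x [x] :=
      ⟨List.isChain_singleton x, rfl, rfl, List.nodup_singleton x⟩
    obtain ⟨p, q, r, hinf, -⟩ := hsep x hx x hxB [x] hpx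
    have := hinf.sublist.length_le
    simp at this
  -- (2) no edge between A and B
  have hAB : ∀ x y, x ∈ A → y ∈ B → ¬ (E x y ∨ E y x) := by
    intro x y hx hy hR
    have hxy : x ≠ y := fun h => hABd x hx (h ▸ hy)
    have hpx : IsPath E x y [x, y] := by
      refine ⟨List.isChain_pair.mpr hR, rfl, rfl, by simp [hxy]⟩
    obtain ⟨p, q, r, hinf, -⟩ := hsep x hx y hy [x, y] hpx
    have := hinf.sublist.length_le
    simp at this
  -- (3) cover: every vertex lies in one of the two subtree sets
  have hcov : ∀ x : V, x ∈ SubtreeVerts T C i j ∪ SubtreeVerts T C j i := by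
    intro x
    have hx : x ∈ ⋃ k, C k := hT.2.1 ▸ Set.mem_univ x
    obtain ⟨k, hk⟩ := Set.mem_iUnion.mp hx
    have key : ∀ m, Relation.ReflTransGen T.Adj i m →
        (T.deleteEdges {s(i, j)}).Reachable i m ∨
        (T.deleteEdges {s(i, j)}).Reachable j m := by
      intro m hm
      induction hm with
      | refl => exact Or.inl (SimpleGraph.Reachable.refl i)
      | @tail b c hab hbc ih =>
        by_cases he : s(b, c) = s(i, j)
        · rcases Sym2.eq_iff.mp he with ⟨hb, hc⟩ | ⟨hb, hc⟩ <;> subst hc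
          · exact Or.inr (SimpleGraph.Reachable.refl _)
          · exact Or.inl (SimpleGraph.Reachable.refl _)
        · have hadj : (T.deleteEdges {s(i, j)}).Adj b c :=
            SimpleGraph.deleteEdges_adj.mpr ⟨hbc, by simpa using he⟩
          exact ih.imp (fun h => h.trans hadj.reachable) (fun h => h.trans hadj.reachable)
    have hswap : ({s(j, i)} : Set (Sym2 ι)) = {s(i, j)} := by rw [Sym2.eq_swap]
    rcases key k ((SimpleGraph.reachable_iff_reflTransGen i k).mp
        (hT.1.isConnected.preconnected i k)) with h | h
    · exact Or.inl (Set.mem_biUnion h hk)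
    · refine Or.inr (Set.mem_biUnion ?_ hk)
      show (T.deleteEdges {s(j, i)}).Reachable j k
      rw [hswap]; exact h
  by_cases hcase : ∃ a b c, [a, b, c] <:+: l ∧ b ∈ K ∧ ¬ Collider E a b c
  · obtain ⟨a, b, c, hinf, hbK, hnc⟩ := hcase
    exact ⟨a, b, c, hinf, Or.inl ⟨hnc, hS ⟨hW ▸ ⟨a, c, hinf⟩, hbK⟩⟩⟩
  push_neg at hcase
  exfalso
  -- no two consecutive vertices of l both in K
  have hKK : ∀ x y, [x, y] <:+: l → x ∈ K → y ∈ K → False := by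
    intro x y hxy hxK hyK
    obtain ⟨s, t, hst⟩ := hxy
    match t with
    | [] =>
      have hlast : l.getLast? = some y := by
        rw [← hst]
        have : s ++ [x, y] ++ ([] : List V) = (s ++ [x]) ++ [y] := by simp
        rw [this, List.getLast?_concat]
      have : y = v := by rw [hl.2.2.1] at hlast; exact (Option.some_injective V hlast).symm
      exact hv.2 (this ▸ hyK)
    | c :: t' =>
      have hinf1 : [x, y, c] <:+: l := ⟨s, t', by rw [← hst]; simp⟩
      have hcol1 : Collider E x y c := hcase x y c hinf1 hyK
      rcases List.eq_nil_or_concat s with rfl | ⟨s', a, rfl⟩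
      · have hhead : l.head? = some x := by rw [← hst]; simp
        have : x = u := by rw [hl.2.1] at hhead; exact (Option.some_injective V hhead).symm
        exact hu.2 (this ▸ hxK)
      · have hinf2 : [a, x, y] <:+: l :=
          ⟨s', c :: t', by rw [← hst]; simp [List.concat_eq_append]⟩
        have hcol2 : Collider E a x y := hcase a x y hinf2 hxK
        exact hG x (Relation.TransGen.head hcol1.1 (Relation.TransGen.single hcol2.2))
  -- classification of vertices of l
  have hcov' : ∀ x ∈ l, x ∈ A ∨ x ∈ B ∨ x ∈ K := by
    intro x _
    by_cases hxK : x ∈ K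
    · exact Or.inr (Or.inr hxK)
    · rcases hcov x with h | h
      · exact Or.inl ⟨h, hxK⟩
      · exact Or.inr (Or.inl ⟨h, hxK⟩)
  obtain ⟨p, q, r, hinf, hpA, hqK, hrB⟩ :=
    cross_lemma hAB hABd (fun x hx => hx.2) l.length l le_rfl hl.1 hcov' hKK
      u hl.2.1 hu v hl.2.2.1 hv
  have hcol : Collider E p q r := hcase p q r hinf hqK
  have hpath : IsPath E p r [p, q, r] :=
    ⟨hl.1.infix hinf, rfl, rfl, hl.2.2.2.sublist hinf.sublist⟩
  obtain ⟨a, b, c, hinf3, hor⟩ := hsep p hpA r hrB [p, q, r] hpath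
  have heq : [a, b, c] = [p, q, r] := hinf3.sublist.eq_of_length (by simp)
  obtain ⟨rfl, rfl, rfl⟩ : p = a ∧ q = b ∧ r = c := by
    simpa using heq.symm
  rcases hor with ⟨hnc, -⟩ | ⟨-, hdesc⟩
  · exact hnc hcol
  · exact hdesc _ Relation.ReflTransGen.refl hqK
end

section
/- Let u and v be non-adjacent vertices in a DAG G, and let l be a path from u to v. If some vertex of l lies outside An({u,v}) (the union of {u,v} with all their ancestors), then l is blocked by every subset S of an({u,v}) (the ancestors of u or v, excluding u, v themselves). -/
def IsAncestral {V : Type*} (E : V → V → Prop) (A : Set V) : Prop :=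
  ∀ ⦃a b⦄, E a b → b ∈ A → a ∈ A

lemma isAncestral_Anc {V : Type*} (E : V → V → Prop) (W : Set V) :
    IsAncestral E (Anc E W) := by
  intro a b hab hb
  by_cases ha : a ∈ W
  · exact Or.inl ha
  · rcases hb with hb | ⟨-, w, hw, hbw⟩
    · exact Or.inr ⟨ha, b, hb, .single hab⟩
    · exact Or.inr ⟨ha, w, hw, .head hab hbw⟩

lemma notMem_anc_of_mem_Desc {V : Type*} {E : V → V → Prop} {W : Set V} {b w : V}
    (hb : b ∉ Anc E W) (hw : w ∈ Desc E b) : w ∉ anc E W := by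
  rintro ⟨-, z, hz, hwz⟩
  exact hb (Or.inr ⟨fun hbW => hb (Or.inl hbW), z, hz, .trans_right hw hwz⟩)

namespace IsAncestral

variable {V : Type*} {E : V → V → Prop} {A : Set V}

lemma exists_collider_of_edge_out (hA : IsAncestral E A) {v : V} (hv : v ∈ A) :
    ∀ (a b : V) (rest : List V), (b :: rest).IsChain (fun x y => E x y ∨ E y x) →
      (b :: rest).getLast? = some v → E a b → b ∉ A →
      ∃ x y z, [x, y, z] <:+: a :: b :: rest ∧ y ∉ A ∧ Collider E x y z := by
  intro a b rest
  induction rest generalizing a b with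
  | nil =>
    intro _ hlast _ hb
    cases hlast
    exact absurd hv hb
  | cons c rest ih =>
    intro hchain hlast hab hb
    obtain ⟨hbc | hcb, hchain⟩ := List.isChain_cons_cons.1 hchain
    · have hc : c ∉ A := fun hc => hb (hA hbc hc)
      obtain ⟨x, y, z, hinf, hy, hcol⟩ := ih b c hchain hlast hbc hc
      exact ⟨x, y, z, hinf.trans (List.infix_cons (List.infix_refl _)), hy, hcol⟩
    · exact ⟨a, b, c, ⟨[], rest, rfl⟩, hb, hab, hcb⟩

lemma exists_collider_of_exists_notMem (hA : IsAncestral E A) {u v : V} (hu : u ∈ A)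
    (hv : v ∈ A) :
    ∀ l : List V, l.IsChain (fun x y => E x y ∨ E y x) → l.head? = some u →
      l.getLast? = some v → (∃ x ∈ l, x ∉ A) →
      ∃ a b c, [a, b, c] <:+: l ∧ b ∉ A ∧ Collider E a b c
  | [], _, hhead, _, _ => by cases hhead
  | [a], _, hhead, _, ⟨x, hx, hxA⟩ => by
    cases hhead
    rw [List.mem_singleton.1 hx] at hxA
    exact absurd hu hxA
  | a :: b :: rest, hchain, hhead, hlast, ⟨x, hx, hxA⟩ => by
    cases hhead
    obtain ⟨hub, hchain⟩ := List.isChain_cons_cons.1 hchain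
    by_cases hb : b ∈ A
    · have hx' : x ∈ b :: rest := (List.mem_cons.1 hx).resolve_left (by rintro rfl; exact hxA hu)
      obtain ⟨a', b', c', hinf, hb', hcol⟩ :=
        exists_collider_of_exists_notMem hA hb hv (b :: rest) hchain rfl hlast ⟨x, hx', hxA⟩
      exact ⟨a', b', c', hinf.trans (List.infix_cons (List.infix_refl _)), hb', hcol⟩
    · have hub : E u b := hub.resolve_right fun hbu => hb (hA hbu hu)
      exact hA.exists_collider_of_edge_out hv u b rest hchain hlast hub hb

end IsAncestral

theorem stmt_2_general {V : Type*} (E : V → V → Prop)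
    (u v : V)
    (l : List V) (hl : IsPath E u v l)
    (hout : ∃ x ∈ l, x ∉ Anc E {u, v}) :
    ∀ S ⊆ anc E {u, v}, Blocked E l S := by
  intro S hS
  obtain ⟨hchain, hhead, hlast, -⟩ := hl
  obtain ⟨a, b, c, hinf, hb, hcol⟩ :=
    (isAncestral_Anc E {u, v}).exists_collider_of_exists_notMem (Or.inl (.inl rfl))
      (Or.inl (.inr rfl)) l hchain hhead hlast hout
  exact ⟨a, b, c, hinf, .inr ⟨hcol, fun w hw hwS => notMem_anc_of_mem_Desc hb hw (hS hwS)⟩⟩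

/-- if `u, v` are non-adjacent in a DAG and some vertex of the
path `l` from `u` to `v` lies outside `An({u,v})`, then `l` is blocked by
every subset `S` of `an({u,v})`. -/
theorem stmt_2 {V : Type*} (E : V → V → Prop) (hG : Acyclic E)
    (u v : V) (hne : u ≠ v) (huv : ¬ E u v) (hvu : ¬ E v u)
    (l : List V) (hl : IsPath E u v l)
    (hout : ∃ x ∈ l, x ∉ Anc E {u, v}) :
    ∀ S ⊆ anc E {u, v}, Blocked E l S :=
  stmt_2_general E u v l hl hout
end

section
/- Let T be a d-separation tree for a DAG G, and let u, v be vertices not contained together in any node of T. Then u and v are non-adjacent in G and are d-separated in G by any separator K on the path in T between a node containing u and a node containing v such that K contains neither u nor v; moreover such a separator exists. -/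
/-!
Walking along the tree path from a node containing `u` to a node containing `v`, the first edge
whose far end no longer contains `u` has a separator avoiding both `u` and `v` (otherwise `u` and
`v` would share a node). Any separator on that path avoiding `u` and `v` splits the tree with `u`
on one side and `v` on the other, so by the defining property of a d-separation tree it
d-separates them. Adjacent vertices cannot be d-separated, since the two-vertex path between them
has no interior vertex that could block it.
-/

namespace SimpleGraph.Walk

variable {ι : Type*} {T : SimpleGraph ι}

theorem IsPath.reachable_deleteEdges_fst {i j : ι} {p : T.Walk i j} (hp : p.IsPath)
    {d : T.Dart} (hd : d ∈ p.darts) : (T.deleteEdges {d.edge}).Reachable i d.fst := by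
  induction p with
  | nil => simp at hd
  | @cons a b _ hab q ih =>
    rw [cons_isPath_iff] at hp
    rw [darts_cons, List.mem_cons] at hd
    rcases hd with rfl | hd
    · rfl
    · have hab_ne : s(a, b) ≠ d.edge := fun h => by
        have hab_mem : s(a, b) ∈ q.edges := h ▸ List.mem_map_of_mem hd
        exact hp.2 (q.fst_mem_support_of_mem_edges hab_mem)
      have hadj : (T.deleteEdges {d.edge}).Adj a b := by
        rw [deleteEdges_adj]
        exact ⟨hab, hab_ne⟩
      exact hadj.reachable.trans (ih hp.1 hd)

theorem IsPath.reachable_deleteEdges_snd {i j : ι} {p : T.Walk i j} (hp : p.IsPath)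
    {d : T.Dart} (hd : d ∈ p.darts) : (T.deleteEdges {d.edge}).Reachable j d.snd := by
  have hd' : d.symm ∈ p.reverse.darts := by simpa [darts_reverse] using hd
  simpa using (isPath_reverse_iff p |>.mpr hp).reachable_deleteEdges_fst hd'

end SimpleGraph.Walk

theorem exists_dart_not_mem_inter {V ι : Type*} {T : SimpleGraph ι} {C : ι → Set V} {u v : V}
    (hsep : ∀ i, ¬ (u ∈ C i ∧ v ∈ C i)) {i j : ι} (p : T.Walk i j) (hu : u ∈ C i)
    (hv : v ∈ C j) : ∃ d ∈ p.darts, u ∉ C d.fst ∩ C d.snd ∧ v ∉ C d.fst ∩ C d.snd := by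
  induction p with
  | nil => exact absurd ⟨hu, hv⟩ (hsep _)
  | @cons a b _ hab q ih =>
    by_cases hub : u ∈ C b
    · obtain ⟨d, hd, hdu, hdv⟩ := ih hub hv
      exact ⟨d, List.mem_cons_of_mem _ hd, hdu, hdv⟩
    · exact ⟨⟨(a, b), hab⟩, List.mem_cons_self, fun h => hub h.2, fun h => hsep a ⟨hu, h.1⟩⟩

theorem mem_subtreeVerts_of_reachable {V ι : Type*} {T : SimpleGraph ι} {C : ι → Set V}
    {i j k : ι} (hk : (T.deleteEdges {s(i, j)}).Reachable k i) {w : V} (hw : w ∈ C k) :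
    w ∈ SubtreeVerts T C i j :=
  Set.mem_biUnion (by exact hk.symm) hw

theorem IsDSepTree.dsep_of_mem_darts {V ι : Type*} {E : V → V → Prop} {T : SimpleGraph ι}
    {C : ι → Set V} (hT : IsDSepTree E T C) {u v : V} {i j : ι} (hu : u ∈ C i) (hv : v ∈ C j)
    {p : T.Walk i j} (hp : p.IsPath) {d : T.Dart} (hd : d ∈ p.darts)
    (hdu : u ∉ C d.fst ∩ C d.snd) (hdv : v ∉ C d.fst ∩ C d.snd) :
    DSep E u v (C d.fst ∩ C d.snd) := by
  have hu' : u ∈ SubtreeVerts T C d.fst d.snd :=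
    mem_subtreeVerts_of_reachable (hp.reachable_deleteEdges_fst hd) hu
  have hv' : v ∈ SubtreeVerts T C d.snd d.fst :=
    mem_subtreeVerts_of_reachable (by rw [Sym2.eq_swap]; exact hp.reachable_deleteEdges_snd hd) hv
  exact hT.2.2 d.fst d.snd d.adj u ⟨hu', hdu⟩ v ⟨hv', hdv⟩

theorem not_blocked_pair {V : Type*} (E : V → V → Prop) (a b : V) (S : Set V) :
    ¬ Blocked E [a, b] S := by
  rintro ⟨_, _, _, hinfix, _⟩
  simpa using hinfix.length_le

theorem not_dsep_of_adj {V : Type*} {E : V → V → Prop} {u v : V} (huv : u ≠ v)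
    (hadj : E u v ∨ E v u) (S : Set V) : ¬ DSep E u v S := fun h =>
  not_blocked_pair E u v S <| h _ ⟨List.isChain_pair.mpr hadj, rfl, rfl, by simp [huv]⟩

theorem stmt_6_general {V ι : Type*} (E : V → V → Prop)
    (T : SimpleGraph ι) (C : ι → Set V) (hT : IsDSepTree E T C)
    (u v : V) (hsep : ∀ i, ¬ (u ∈ C i ∧ v ∈ C i)) :
    (u ≠ v ∧ ¬ E u v ∧ ¬ E v u) ∧
      ∀ i j, u ∈ C i → v ∈ C j →
        ∀ p : T.Walk i j, p.IsPath →
          ((∀ d ∈ p.darts, u ∉ C d.fst ∩ C d.snd → v ∉ C d.fst ∩ C d.snd →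
              DSep E u v (C d.fst ∩ C d.snd)) ∧
            ∃ d ∈ p.darts, u ∉ C d.fst ∩ C d.snd ∧ v ∉ C d.fst ∩ C d.snd) := by
  classical
  refine ⟨?_, fun i j hu hv p hp =>
    ⟨fun _ hd => hT.dsep_of_mem_darts hu hv hp hd, exists_dart_not_mem_inter hsep p hu hv⟩⟩
  have hcover : ∀ w : V, ∃ i, w ∈ C i := fun w => Set.mem_iUnion.mp (hT.2.1 ▸ Set.mem_univ w)
  obtain ⟨i, hi⟩ := hcover u
  obtain ⟨j, hj⟩ := hcover v
  have huv : u ≠ v := by rintro rfl; exact hsep i ⟨hi, hi⟩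
  obtain ⟨p, hp⟩ := (hT.1.connected i j).some.toPath
  obtain ⟨d, hd, hdu, hdv⟩ := exists_dart_not_mem_inter hsep p hi hj
  have hdsep := hT.dsep_of_mem_darts hi hj hp hd hdu hdv
  exact ⟨huv, fun h => not_dsep_of_adj huv (.inl h) _ hdsep,
    fun h => not_dsep_of_adj huv (.inr h) _ hdsep⟩

/-- if `u` and `v` never occur together in a node of the
d-separation tree, they are non-adjacent in `G`, every separator on the tree
path between a node containing `u` and a node containing `v` that avoids both
`u` and `v` d-separates them, and such a separator exists. -/
theorem stmt_6 {V ι : Type*} (E : V → V → Prop) (hG : Acyclic E)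
    (T : SimpleGraph ι) (C : ι → Set V) (hT : IsDSepTree E T C)
    (u v : V) (hsep : ∀ i, ¬ (u ∈ C i ∧ v ∈ C i)) :
    (u ≠ v ∧ ¬ E u v ∧ ¬ E v u) ∧
      ∀ i j, u ∈ C i → v ∈ C j →
        ∀ p : T.Walk i j, p.IsPath →
          ((∀ d ∈ p.darts, u ∉ C d.fst ∩ C d.snd → v ∉ C d.fst ∩ C d.snd →
              DSep E u v (C d.fst ∩ C d.snd)) ∧
            ∃ d ∈ p.darts, u ∉ C d.fst ∩ C d.snd ∧ v ∉ C d.fst ∩ C d.snd) :=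
  stmt_6_general E T C hT u v hsep
end

section
/- In a DAG G, if u and v are non-adjacent and v is a non-descendant of u, then the set pa(u) of parents of u d-separates u from v. -/
/-!
Take a path `u = x₀, x₁, …, xₙ = v`; non-adjacency forces `n ≥ 2`. If `x₁ → u`, then `x₁` is a
parent of `u` and not a collider (that would need the 2-cycle `u → x₁ → u`). If `u → x₁`, follow
the path while its edges point forward: since `v` is not a descendant of `u`, some edge turns back,
and there the path has a collider that is a proper descendant of `u`. None of its descendants is a
parent of `u`, as that would close a directed cycle through `u`.
-/

open Relation

section

variable {V : Type*} {E : V → V → Prop}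

theorem Acyclic.not_edge_of_mem_desc (hG : Acyclic E) {u q w : V} (huq : TransGen E u q)
    (hw : w ∈ Desc E q) : ¬ E w u :=
  fun hwu => hG u ((huq.trans_left hw).tail hwu)

theorem exists_collider_mem_of_chain {D : Set V} (hD : ∀ x y, x ∈ D → E x y → y ∈ D) {v : V}
    (hv : v ∉ D) {a b : V} {rest : List V}
    (hchain : (a :: b :: rest).IsChain (fun x y => E x y ∨ E y x)) (hab : E a b) (hb : b ∈ D)
    (hlast : (a :: b :: rest).getLast? = some v) :
    ∃ p q r, [p, q, r] <:+: a :: b :: rest ∧ Collider E p q r ∧ q ∈ D := by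
  induction rest generalizing a b with
  | nil =>
    simp only [List.getLast?_cons_cons, List.getLast?_singleton, Option.some.injEq] at hlast
    exact absurd (hlast ▸ hb) hv
  | cons c rest ih =>
    have hchain' := (List.isChain_cons_cons.mp hchain).2
    rcases (List.isChain_cons_cons.mp hchain').1 with hbc | hcb
    · rw [List.getLast?_cons_cons] at hlast
      obtain ⟨p, q, r, hinf, hcol, hq⟩ := ih hchain' hbc (hD b c hb hbc) hlast
      exact ⟨p, q, r, List.infix_cons hinf, hcol, hq⟩
    · exact ⟨a, b, c, ⟨[], rest, rfl⟩, ⟨hab, hcb⟩, hb⟩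

theorem IsPath.exists_eq_cons_cons_cons {u v : V} {l : List V} (hl : IsPath E u v l)
    (hne : u ≠ v) (huv : ¬ E u v) (hvu : ¬ E v u) : ∃ b c rest, l = u :: b :: c :: rest := by
  obtain ⟨hchain, hhead, hlast, -⟩ := hl
  match l, hchain, hhead, hlast with
  | [x], _, hhead, hlast =>
    simp only [List.head?_cons, List.getLast?_singleton, Option.some.injEq] at hhead hlast
    exact absurd (hhead ▸ hlast) hne
  | [x, y], hchain, hhead, hlast =>
    simp only [List.head?_cons, List.getLast?_cons_cons, List.getLast?_singleton,
      Option.some.injEq] at hhead hlast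
    subst hhead hlast
    rcases (List.isChain_cons_cons.mp hchain).1 with h | h
    exacts [absurd h huv, absurd h hvu]
  | x :: y :: z :: rest, _, hhead, _ =>
    simp only [List.head?_cons, Option.some.injEq] at hhead
    exact ⟨y, z, rest, hhead ▸ rfl⟩

end

/-- in a DAG, if `u` and `v` are non-adjacent and `v` is a
non-descendant of `u`, then the parents of `u` d-separate `u` from `v`. -/
theorem stmt_7 {V : Type*} (E : V → V → Prop) (hG : Acyclic E)
    (u v : V) (hne : u ≠ v) (huv : ¬ E u v) (hvu : ¬ E v u)
    (hnd : ¬ Relation.TransGen E u v) :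
    DSep E u v {x | E x u} := by
  intro l hl
  obtain ⟨b, c, rest, rfl⟩ := hl.exists_eq_cons_cons_cons hne huv hvu
  have hchain := hl.1
  rcases (List.isChain_cons_cons.mp hchain).1 with hub | hbu
  · obtain ⟨p, q, r, hinf, hcol, huq⟩ :=
      exists_collider_mem_of_chain (D := {w | TransGen E u w}) (fun _ _ hx hxy => hx.tail hxy)
        hnd hchain hub (.single hub) hl.2.2.1
    exact ⟨p, q, r, hinf, .inr ⟨hcol, fun w hw hwu => hG.not_edge_of_mem_desc huq hw hwu⟩⟩
  · refine ⟨u, b, c, ⟨[], rest, rfl⟩, .inl ⟨fun hcol => ?_, hbu⟩⟩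
    exact hG.not_edge_of_mem_desc (.single hcol.1) ReflTransGen.refl hbu
end

section
/- Let G be a DAG, u and v non-adjacent vertices with v a non-descendant of u, and let l be a path from u to v all of whose vertices lie in An({u,v}). Then the vertex x adjacent to u on l is a parent of u (the edge is oriented x → u). -/
/-- if `u, v` are non-adjacent, `v` is a non-descendant of `u`,
and `l` is a path from `u` to `v` contained in `An({u,v})`, then the vertex
adjacent to `u` on `l` is a parent of `u`. -/
theorem stmt_8 {V : Type*} (E : V → V → Prop) (hG : Acyclic E)
    (u v : V) (hne : u ≠ v) (huv : ¬ E u v) (hvu : ¬ E v u)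
    (hnd : ¬ Relation.TransGen E u v)
    (l : List V) (hl : IsPath E u v l)
    (hAn : ∀ x ∈ l, x ∈ Anc E {u, v}) :
    ∀ (x : V) (rest : List V), l = u :: x :: rest → E x u := by
  rintro x rest rfl
  obtain ⟨hchain, -, -, hnodup⟩ := hl
  have hedge : E u x ∨ E x u := (List.isChain_cons_cons.mp hchain).1
  rcases hedge with h | h
  · exfalso
    have hxl : x ∈ u :: x :: rest := by simp
    have hxu : x ≠ u := by
      intro he; subst he; simp [List.nodup_cons] at hnodup
    rcases hAn x hxl with hx | ⟨hxW, w, hw, htg⟩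
    · simp only [Set.mem_insert_iff, Set.mem_singleton_iff] at hx
      rcases hx with rfl | rfl
      · exact hxu rfl
      · exact huv h
    · simp only [Set.mem_insert_iff, Set.mem_singleton_iff] at hw
      rcases hw with rfl | rfl
      · exact hG _ (Relation.TransGen.head h htg)
      · exact hnd (Relation.TransGen.head h htg)
  · exact h
end

section
/- Let T be a d-separation tree for a DAG G. Then for any two distinct nodes C_i, C_j of T, every separator on the path in T between C_i and C_j contains C_i ∩ C_j; in particular, if a vertex u belongs to two nodes of T, it belongs to every separator on the tree path between them. -/
/-! A vertex is never d-separated from itself: the one-vertex path from `u` to `u` has no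
interior vertex that could block it. Hence a vertex lying in the subtrees on both sides of a tree
edge lies in the separator of that edge, and a tree path from `i` to `j` has, for each of its
edges, `i` on one side and `j` on the other. -/

theorem not_blocked_singleton {V : Type*} (E : V → V → Prop) (u : V) (S : Set V) :
    ¬ Blocked E [u] S := by
  rintro ⟨a, b, c, hsub, -⟩
  simpa using hsub.sublist.length_le

theorem isPath_singleton {V : Type*} (E : V → V → Prop) (u : V) : IsPath E u u [u] :=
  ⟨List.isChain_singleton u, rfl, rfl, List.nodup_singleton u⟩

theorem not_dSep_self {V : Type*} (E : V → V → Prop) (u : V) (S : Set V) : ¬ DSep E u u S :=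
  fun h => not_blocked_singleton E u S (h [u] (isPath_singleton E u))

theorem IsDSepTree.mem_inter_of_mem_subtreeVerts {V ι : Type*} {E : V → V → Prop}
    {T : SimpleGraph ι} {C : ι → Set V} (hT : IsDSepTree E T C) {a b : ι} (hab : T.Adj a b)
    {u : V} (hua : u ∈ SubtreeVerts T C a b) (hub : u ∈ SubtreeVerts T C b a) :
    u ∈ C a ∩ C b := by
  by_contra hu
  exact not_dSep_self E u _ (hT.2.2 a b hab u ⟨hua, hu⟩ u ⟨hub, hu⟩)

namespace SimpleGraph.Walk

variable {ι : Type*} {T : SimpleGraph ι}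

theorem notMem_edges_of_notMem_support {a k b : ι} {q : T.Walk k b} (ha : a ∉ q.support)
    (x : ι) : s(a, x) ∉ q.edges :=
  fun he => ha (q.fst_mem_support_of_mem_edges he)

theorem IsPath.reachable_deleteEdges_of_mem_darts {i j : ι} {p : T.Walk i j} (hp : p.IsPath)
    {d : T.Dart} (hd : d ∈ p.darts) :
    (T.deleteEdges {d.edge}).Reachable i d.fst ∧ (T.deleteEdges {d.edge}).Reachable d.snd j := by
  induction p with
  | nil => simp at hd
  | @cons a k b hak q ih =>
    have ha : a ∉ q.support := (cons_isPath_iff hak q).mp hp |>.2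
    rw [darts_cons, List.mem_cons] at hd
    rcases hd with rfl | hd
    · refine ⟨.rfl, ⟨q.toDeleteEdges _ ?_⟩⟩
      rintro e he rfl
      exact notMem_edges_of_notMem_support ha k he
    · obtain ⟨hk, hj⟩ := ih hp.of_cons hd
      have hak' : (T.deleteEdges {d.edge}).Adj a k := by
        refine (deleteEdges_adj ..).mpr ⟨hak, fun he => ?_⟩
        rw [Set.mem_singleton_iff] at he
        exact notMem_edges_of_notMem_support ha k (he ▸ List.mem_map_of_mem hd)
      exact ⟨hak'.reachable.trans hk, hj⟩

end SimpleGraph.Walk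

theorem stmt_9_general {V ι : Type*} (E : V → V → Prop)
    (T : SimpleGraph ι) (C : ι → Set V) (hT : IsDSepTree E T C) :
    ∀ i j, i ≠ j → ∀ p : T.Walk i j, p.IsPath →
      ∀ d ∈ p.darts, C i ∩ C j ⊆ C d.fst ∩ C d.snd := by
  intro i j _ p hp d hd u ⟨hui, huj⟩
  obtain ⟨hi, hj⟩ := hp.reachable_deleteEdges_of_mem_darts hd
  refine hT.mem_inter_of_mem_subtreeVerts d.adj (Set.mem_biUnion hi.symm hui)
    (Set.mem_biUnion ?_ huj)
  rw [Sym2.eq_swap]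
  exact hj

/-- for distinct nodes `C i`, `C j` of a d-separation tree, every
separator on the tree path between them contains `C i ∩ C j`; in particular a
vertex lying in both nodes lies in every separator on that path. -/
theorem stmt_9 {V ι : Type*} (E : V → V → Prop) (hG : Acyclic E)
    (T : SimpleGraph ι) (C : ι → Set V) (hT : IsDSepTree E T C) :
    ∀ i j, i ≠ j → ∀ p : T.Walk i j, p.IsPath →
      ∀ d ∈ p.darts, C i ∩ C j ⊆ C d.fst ∩ C d.snd :=
  stmt_9_general E T C hT
end
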